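/- arXiv:2303.17033 — 2 statements merged into one kernel-verified Lean document; each statement's English description precedes it below -/
import Mathlib

section
/- For a P-extendable i-centered incomplete game (N,K,v) and any x ∈ {0,1}^{K^c}, the game v_x defined via its Möbius transform by m^{v_x}(∅)=0, m^{v_x}({i})=v({i}), and for S ∈ K^c: m^{v_x}(S) = m^v(S∪{i}) and m^{v_x}(S∪{i})=0 if x_S=0, while m^{v_x}(S)=0 and m^{v_x}(S∪{i})=m^v(S∪{i}) if x_S=1, is a positive extension of (N,K,v). -/
/-!
The game `w = Σ_{T ⊆ S} mvx T` has Möbius transform `mvx` by Möbius inversion, and every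
prescribed coefficient is `0`, `v {i} = m^v({i})` or some `m^v(S)` with `S ∈ K`, hence nonnegative.
For `i ∉ T` the coefficients of `T` and `T ∪ {i}` always add up to `m^v(T ∪ {i})`, whatever `x`
is; since `v(∅) = 0`, `T ↦ m^v(T ∪ {i})` is the Möbius transform of `W ↦ v(W ∪ {i})`, so Möbius
inversion gives `w(P ∪ {i}) = Σ_{T ⊆ P} m^v(T ∪ {i}) = v(P ∪ {i})`.
-/

open Finset

/-- Möbius transform of a (complete) cooperative game `w : 2^N → ℝ`. -/
noncomputable def mobius {α : Type*} [DecidableEq α] (w : Finset α → ℝ) (T : Finset α) : ℝ :=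
  ∑ S ∈ T.powerset, (-1 : ℝ) ^ (T.card - S.card) * w S

/-- Möbius transform of an `i`-centered incomplete game `v`, defined for `S ∈ K`,
where `K = {S : i ∈ S} ∪ {∅}`: `m^v(S) = Σ_{T ⊆ S, T ∈ K} (-1)^{|S \ T|} v(T)`. -/
noncomputable def mobiusK {α : Type*} [DecidableEq α] (i : α) (v : Finset α → ℝ)
    (S : Finset α) : ℝ :=
  ∑ T ∈ S.powerset.filter (fun T => i ∈ T ∨ T = ∅), (-1 : ℝ) ^ ((S \ T).card) * v T

/-- The prescribed Möbius transform of the game `v_x`, for `x : K^c → {0,1}`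
(encoded as a Boolean function on coalitions). -/
noncomputable def mvx {α : Type*} [DecidableEq α] (i : α) (v : Finset α → ℝ)
    (x : Finset α → Bool) (T : Finset α) : ℝ :=
  if T = ∅ then 0
  else if T = {i} then v {i}
  else if i ∉ T then (if x T = false then mobiusK i v (insert i T) else 0)
  else (if x (T.erase i) = true then mobiusK i v T else 0)

section Mobius

variable {α : Type*} [DecidableEq α]

@[simp]
lemma mobius_empty (f : Finset α → ℝ) : mobius f ∅ = f ∅ := by
  simp [mobius]

lemma mobius_congr {f g : Finset α → ℝ} {T : Finset α} (h : ∀ S ⊆ T, f S = g S) :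
    mobius f T = mobius g T :=
  sum_congr rfl fun S hS => by rw [h S (mem_powerset.mp hS)]

lemma mobius_add (f g : Finset α → ℝ) (T : Finset α) :
    mobius (fun S => f S + g S) T = mobius f T + mobius g T := by
  simp only [mobius, mul_add, sum_add_distrib]

lemma mobius_insert {a : α} {T : Finset α} (ha : a ∉ T) (f : Finset α → ℝ) :
    mobius f (insert a T) = mobius (fun S => f (insert a S)) T - mobius f T := by
  rw [mobius, sum_powerset_insert ha, add_comm, sub_eq_add_neg, mobius, mobius, ← sum_neg_distrib]
  congr 1 <;> refine sum_congr rfl fun S hS => ?_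
  all_goals
    have hST := card_le_card (mem_powerset.mp hS)
    have haS : a ∉ S := fun h => ha (mem_powerset.mp hS h)
    rw [card_insert_of_notMem ha]
  · rw [card_insert_of_notMem haS, Nat.add_sub_add_right]
  · rw [Nat.sub_add_comm hST, pow_succ]
    ring

theorem mobius_sum_powerset (f : Finset α → ℝ) (T : Finset α) :
    mobius (fun S => ∑ U ∈ S.powerset, f U) T = f T := by
  induction T using Finset.induction_on generalizing f with
  | empty => simp
  | insert a T ha ih =>
    have hzeta : ∀ S ⊆ T, ∑ U ∈ (insert a S).powerset, f U =
        ∑ U ∈ S.powerset, f U + ∑ U ∈ S.powerset, f (insert a U) := fun S hS =>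
      sum_powerset_insert (fun h => ha (hS h)) f
    rw [mobius_insert ha, mobius_congr hzeta, mobius_add, ih, ih]
    ring

theorem sum_powerset_mobius (f : Finset α → ℝ) (T : Finset α) :
    ∑ S ∈ T.powerset, mobius f S = f T := by
  induction T using Finset.induction_on generalizing f with
  | empty => simp
  | insert a T ha ih =>
    have hins : ∀ S ∈ T.powerset, mobius f (insert a S) =
        mobius (fun S => f (insert a S)) S - mobius f S := fun S hS =>
      mobius_insert (fun h => ha (mem_powerset.mp hS h)) f
    rw [sum_powerset_insert ha, sum_congr rfl hins, sum_sub_distrib, ih, ih]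
    ring

end Mobius

section IncompleteGame

variable {α : Type*} [DecidableEq α] (i : α) (v : Finset α → ℝ)

lemma mobiusK_eq_mobius (S : Finset α) :
    mobiusK i v S = mobius (fun T => if i ∈ T ∨ T = ∅ then v T else 0) S := by
  rw [mobiusK, mobius, sum_filter]
  refine sum_congr rfl fun T hT => ?_
  rw [card_sdiff_of_subset (mem_powerset.mp hT)]
  split_ifs <;> simp

variable {i v}

lemma mobiusK_insert (hv : v ∅ = 0) {R : Finset α} (hiR : i ∉ R) :
    mobiusK i v (insert i R) = mobius (fun W => v (insert i W)) R := by
  have hR : mobius (fun T => if i ∈ T ∨ T = ∅ then v T else 0) R = mobius (fun _ => 0) R :=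
    mobius_congr fun T hT => by
      rcases eq_or_ne T ∅ with rfl | hT0
      · simp [hv]
      · have hiT : i ∉ T := fun h => hiR (hT h)
        simp [hT0, hiT]
  rw [mobiusK_eq_mobius, mobius_insert hiR, hR]
  simp [mobius]

lemma mobiusK_singleton (hv : v ∅ = 0) : mobiusK i v {i} = v {i} := by
  simpa using mobiusK_insert hv (notMem_empty i)

end IncompleteGame

section VxGame

variable {α : Type*} [DecidableEq α] {i : α} {v : Finset α → ℝ}

lemma mvx_nonneg (hv : v ∅ = 0) (hpos : ∀ S : Finset α, (i ∈ S ∨ S = ∅) → 0 ≤ mobiusK i v S)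
    (x : Finset α → Bool) (T : Finset α) : 0 ≤ mvx i v x T := by
  unfold mvx
  split_ifs with _ _ hiT
  · exact le_rfl
  · exact mobiusK_singleton hv ▸ hpos {i} (.inl (mem_singleton_self i))
  · exact hpos T (.inl hiT)
  · exact le_rfl
  · exact hpos _ (.inl (mem_insert_self i T))
  · exact le_rfl

lemma mvx_add_mvx_insert (hv : v ∅ = 0) (x : Finset α → Bool) {T : Finset α} (hiT : i ∉ T) :
    mvx i v x T + mvx i v x (insert i T) = mobiusK i v (insert i T) := by
  rcases eq_or_ne T ∅ with rfl | hT0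
  · simp [mvx, mobiusK_singleton hv]
  · have hTi : T ≠ {i} := by rintro rfl; simp at hiT
    have hiTi : insert i T ≠ {i} := fun h =>
      (subset_singleton_iff.mp (h ▸ subset_insert i T)).elim hT0 hTi
    cases hx : x T <;> simp [mvx, hT0, hTi, hiTi, hiT, hx]

lemma sum_powerset_mvx_insert (hv : v ∅ = 0) (x : Finset α → Bool) {P : Finset α} (hiP : i ∉ P) :
    ∑ T ∈ (insert i P).powerset, mvx i v x T = v (insert i P) := by
  have hpair : ∀ T ∈ P.powerset, mvx i v x T + mvx i v x (insert i T) =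
      mobius (fun W => v (insert i W)) T := fun T hT => by
    have hiT : i ∉ T := fun h => hiP (mem_powerset.mp hT h)
    rw [mvx_add_mvx_insert hv x hiT, mobiusK_insert hv hiT]
  rw [sum_powerset_insert hiP, ← sum_add_distrib, sum_congr rfl hpair, sum_powerset_mobius]

end VxGame

theorem stmt2_general {α : Type*} [DecidableEq α] (i : α) (v : Finset α → ℝ)
    (hv : v ∅ = 0) (hpos : ∀ S : Finset α, (i ∈ S ∨ S = ∅) → 0 ≤ mobiusK i v S)
    (x : Finset α → Bool) :
    (fun S : Finset α => ∑ T ∈ S.powerset, mvx i v x T) ∅ = 0 ∧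
    (∀ T : Finset α, 0 ≤ mobius (fun S : Finset α => ∑ T ∈ S.powerset, mvx i v x T) T) ∧
    (∀ S : Finset α, (i ∈ S ∨ S = ∅) →
      (fun S : Finset α => ∑ T ∈ S.powerset, mvx i v x T) S = v S) := by
  refine ⟨by simp [mvx], fun T => ?_, fun S hS => ?_⟩
  · rw [mobius_sum_powerset]
    exact mvx_nonneg hv hpos x T
  · rcases hS with hiS | rfl
    · rw [← insert_erase hiS]
      exact sum_powerset_mvx_insert hv x (notMem_erase i S)
    · simp [mvx, hv]

/-- For a P-extendable `i`-centered incomplete game and any `x ∈ {0,1}^{K^c}`, the game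
`v_x` defined via its Möbius transform `mvx` is a positive extension of `(N,K,v)`. -/
theorem stmt2 {α : Type*} [Fintype α] [DecidableEq α] (i : α) (v : Finset α → ℝ)
    (hv : v ∅ = 0) (hpos : ∀ S : Finset α, (i ∈ S ∨ S = ∅) → 0 ≤ mobiusK i v S)
    (x : Finset α → Bool) :
    (fun S : Finset α => ∑ T ∈ S.powerset, mvx i v x T) ∅ = 0 ∧
    (∀ T : Finset α, 0 ≤ mobius (fun S : Finset α => ∑ T ∈ S.powerset, mvx i v x T) T) ∧
    (∀ S : Finset α, (i ∈ S ∨ S = ∅) →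
      (fun S : Finset α => ∑ T ∈ S.powerset, mvx i v x T) S = v S) :=
  stmt2_general i v hv hpos x
end

section
/- For every positive extension w of a P-extendable i-centered incomplete game (N,K,v) and every S ∈ K^c, it holds that 0 ≤ w(S) ≤ v(S∪{i}); i.e., v₁(S) ≤ w(S) ≤ v₀(S). -/
open Finset

/-!
Möbius inversion gives `w T = ∑_{S ⊆ T} m^w(S)`, so a game with nonnegative Möbius transform is
nonnegative and monotone under inclusion. The upper bound is then `w S ≤ w (S ∪ {i}) = v (S ∪ {i})`,
since `S ∪ {i} ∈ K`.
-/

section Mobius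

variable {α : Type*} [DecidableEq α]

theorem sum_Icc_neg_one_pow_card_sub {R : Type*} [Ring R] {s t : Finset α} (h : s ⊆ t) :
    ∑ u ∈ Icc s t, (-1 : R) ^ (#u - #s) = if s = t then 1 else 0 := by
  calc ∑ u ∈ Icc s t, (-1 : R) ^ (#u - #s)
      = ∑ u ∈ (t \ s).powerset, (-1 : R) ^ #u := by
        refine sum_nbij' (· \ s) (s ∪ ·) (fun u hu => ?_) (fun u hu => ?_) (fun u hu => ?_)
          (fun u hu => ?_) (fun u hu => ?_) <;> simp only [mem_Icc, mem_powerset] at hu ⊢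
        · exact sdiff_subset_sdiff hu.2 subset_rfl
        · exact ⟨subset_union_left, union_subset h (hu.trans sdiff_subset)⟩
        · exact union_sdiff_of_subset hu.1
        · exact union_sdiff_cancel_left (disjoint_of_subset_right hu disjoint_sdiff)
        · rw [card_sdiff_of_subset hu.1]
    _ = ((∑ u ∈ (t \ s).powerset, (-1 : ℤ) ^ #u : ℤ) : R) := by push_cast; rfl
    _ = if s = t then 1 else 0 := by
        have hempty : t \ s = ∅ ↔ s = t :=
          sdiff_eq_empty_iff_subset.trans ⟨h.antisymm, fun hst => hst ▸ subset_rfl⟩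
        rw [sum_powerset_neg_one_pow_card]
        simp only [hempty]
        split_ifs <;> simp

theorem sum_powerset_mobius_s16 (w : Finset α → ℝ) (t : Finset α) :
    ∑ s ∈ t.powerset, mobius w s = w t := by
  calc ∑ s ∈ t.powerset, mobius w s
      = ∑ s ∈ t.powerset, ∑ r ∈ s.powerset, (-1 : ℝ) ^ (#s - #r) * w r := rfl
    _ = ∑ r ∈ t.powerset, ∑ s ∈ Icc r t, (-1 : ℝ) ^ (#s - #r) * w r :=
        sum_comm' fun s r => by
          simp only [mem_powerset, mem_Icc]
          exact ⟨fun ⟨hst, hrs⟩ => ⟨⟨hrs, hst⟩, hrs.trans hst⟩, fun ⟨⟨hrs, hst⟩, _⟩ => ⟨hst, hrs⟩⟩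
    _ = ∑ r ∈ t.powerset, if r = t then w r else 0 :=
        sum_congr rfl fun r hr => by
          rw [← sum_mul, sum_Icc_neg_one_pow_card_sub (mem_powerset.1 hr), ite_zero_mul, one_mul]
    _ = w t := by simp

variable {w : Finset α → ℝ}

theorem nonneg_of_mobius_nonneg (hw : ∀ t, 0 ≤ mobius w t) (s : Finset α) : 0 ≤ w s :=
  sum_powerset_mobius_s16 w s ▸ sum_nonneg fun t _ => hw t

theorem monotone_of_mobius_nonneg (hw : ∀ t, 0 ≤ mobius w t) : Monotone w := fun s t hst => by
  rw [← sum_powerset_mobius_s16 w s, ← sum_powerset_mobius_s16 w t]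
  exact sum_le_sum_of_subset_of_nonneg (powerset_mono.2 hst) fun u _ _ => hw u

end Mobius

theorem stmt16_general {α : Type*} [DecidableEq α] (i : α) (v w : Finset α → ℝ)
    (hwpos : ∀ T : Finset α, 0 ≤ mobius w T)
    (hext : ∀ S : Finset α, (i ∈ S ∨ S = ∅) → w S = v S) :
    ∀ S : Finset α, i ∉ S → S ≠ ∅ → 0 ≤ w S ∧ w S ≤ v (insert i S) := by
  intro S _ _
  refine ⟨nonneg_of_mobius_nonneg hwpos S, ?_⟩
  calc w S ≤ w (insert i S) := monotone_of_mobius_nonneg hwpos (subset_insert i S)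
    _ = v (insert i S) := hext _ (Or.inl (mem_insert_self i S))

/-- Every positive extension `w` of a P-extendable `i`-centered incomplete game satisfies
`0 ≤ w(S) ≤ v(S ∪ {i})` for every `S ∈ K^c`, i.e. `v₁(S) ≤ w(S) ≤ v₀(S)`. -/
theorem stmt16 {α : Type*} [Fintype α] [DecidableEq α] (i : α) (v w : Finset α → ℝ)
    (hv : v ∅ = 0) (hpos : ∀ S : Finset α, (i ∈ S ∨ S = ∅) → 0 ≤ mobiusK i v S)
    (hw0 : w ∅ = 0) (hwpos : ∀ T : Finset α, 0 ≤ mobius w T)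
    (hext : ∀ S : Finset α, (i ∈ S ∨ S = ∅) → w S = v S) :
    ∀ S : Finset α, i ∉ S → S ≠ ∅ → 0 ≤ w S ∧ w S ≤ v (insert i S) :=
  stmt16_general i v w hwpos hext
end
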